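/- arXiv:math/0506106 — 6 statements merged into one kernel-verified Lean document; each statement's English description precedes it below -/
import Mathlib

section
/- Let n ≥ 0, m ∈ ℤ and let (f_0, …, f_n) be a cocycle system of depth n and weight m. Then for every real matrix A ∈ GL⁺(2,ℝ) and every B ∈ SL(2,ℤ), one has (f||_m A)(z) = (f||_m (BA))(z) for all z ∈ ℍ. -/
open Complex Finset

/-- A cocycle system of depth `n` and weight `m`: a tuple `(f 0, …, f n)` of holomorphic
functions on the upper half plane satisfying the defining transformation rule under
`SL(2,ℤ)`. -/
def IsCocycleSystem (n : ℕ) (m : ℤ) (f : ℕ → ℂ → ℂ) : Prop :=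
  (∀ i ≤ n, DifferentiableOn ℂ (f i) {z : ℂ | 0 < z.im}) ∧
  ∀ A : Matrix (Fin 2) (Fin 2) ℤ, A.det = 1 → ∀ i ≤ n, ∀ z : ℂ, 0 < z.im →
    f i (((A 0 0 : ℂ) * z + (A 0 1 : ℂ)) / ((A 1 0 : ℂ) * z + (A 1 1 : ℂ))) =
      ∑ j ∈ Finset.range (n - i + 1),
        ((n - i).choose j : ℂ) * (A 1 0 : ℂ) ^ j *
          ((A 1 0 : ℂ) * z + (A 1 1 : ℂ)) ^ (m - 2 * (i : ℤ) - (j : ℤ)) * f (i + j) z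

/-- The double slash operator `(f‖_m A)(z)` for a cocycle system and `A ∈ GL⁺(2,ℝ)`. -/
noncomputable def dslash (n : ℕ) (m : ℤ) (f : ℕ → ℂ → ℂ)
    (A : Matrix (Fin 2) (Fin 2) ℝ) (z : ℂ) : ℂ :=
  ((A.det : ℂ)) ^ (m - (n : ℤ) - 1) *
    ∑ i ∈ Finset.range (n + 1),
      (n.choose i : ℂ) * (-(A 1 0 : ℂ) / (A.det : ℂ)) ^ i *
        ((A 1 0 : ℂ) * z + (A 1 1 : ℂ)) ^ ((i : ℤ) - m) *
        f i (((A 0 0 : ℂ) * z + (A 0 1 : ℂ)) / ((A 1 0 : ℂ) * z + (A 1 1 : ℂ)))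

/-!
For `A = [[a, b], [c, d]]` put `w = A z`, `j_A = c z + d`, and let `γ` be the lower-left entry
of `B`. Since `j(BA, z) = j(B, w) j(A, z)` and `(BA) z = B w`, expanding each `f_i (B w)` by the
cocycle relation writes `f‖_m (BA)` as a double sum of multiples of `f_{i+j} (w)`. Collecting the
terms with `i + j = k` produces, by the binomial theorem, the power `(x j_A + γ)^k` with
`x = -(BA)₁₀ / det A`, and the polynomial identity `γ det A - (BA)₁₀ j_A = -c j(BA, z)` turns it
into the `k`-th term of `f‖_m A`.
-/

theorem Complex.ofReal_det {ι : Type*} [Fintype ι] [DecidableEq ι] (A : Matrix ι ι ℝ) :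
    (A.det : ℂ) = (A.map ofReal).det :=
  ofRealHom.map_det A

namespace Matrix

variable {K : Type*} [Field K]

def denom (M : Matrix (Fin 2) (Fin 2) K) (z : K) : K := M 1 0 * z + M 1 1

def moebius (M : Matrix (Fin 2) (Fin 2) K) (z : K) : K := (M 0 0 * z + M 0 1) / M.denom z

theorem mul_apply_zero_mul_add_mul_apply_one (N M : Matrix (Fin 2) (Fin 2) K) {z : K}
    (hz : M.denom z ≠ 0) (r : Fin 2) :
    (N * M) r 0 * z + (N * M) r 1 = (N r 0 * M.moebius z + N r 1) * M.denom z := by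
  rw [moebius, add_mul, mul_assoc, div_mul_cancel₀ _ hz]
  simp only [denom, mul_apply, Fin.sum_univ_two]
  ring

theorem denom_mul (N M : Matrix (Fin 2) (Fin 2) K) {z : K} (hz : M.denom z ≠ 0) :
    (N * M).denom z = N.denom (M.moebius z) * M.denom z :=
  mul_apply_zero_mul_add_mul_apply_one N M hz 1

theorem moebius_mul (N M : Matrix (Fin 2) (Fin 2) K) {z : K} (hz : M.denom z ≠ 0) :
    (N * M).moebius z = N.moebius (M.moebius z) := by
  rw [moebius, mul_apply_zero_mul_add_mul_apply_one N M hz 0, denom_mul N M hz,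
    mul_div_mul_right _ _ hz]
  rfl

theorem one_zero_mul_det_sub_mul_denom (N M : Matrix (Fin 2) (Fin 2) K) (z : K) :
    N 1 0 * M.det - (N * M) 1 0 * M.denom z = -(M 1 0 * (N * M).denom z) := by
  simp only [det_fin_two, denom, mul_apply, Fin.sum_univ_two]
  ring

theorem denom_map_ofReal_ne_zero {A : Matrix (Fin 2) (Fin 2) ℝ} (hA : A.det ≠ 0) {z : ℂ}
    (hz : 0 < z.im) : (A.map ofReal).denom z ≠ 0 := by
  intro h
  have him : A 1 0 * z.im = 0 := by simpa [denom] using congrArg im h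
  have hc : A 1 0 = 0 := (mul_eq_zero.mp him).resolve_right hz.ne'
  have hd : A 1 1 = 0 := by simpa [denom, hc] using congrArg re h
  exact hA (by simp [det_fin_two, hc, hd])

theorem im_moebius_map_ofReal_pos {A : Matrix (Fin 2) (Fin 2) ℝ} (hA : 0 < A.det) {z : ℂ}
    (hz : 0 < z.im) : 0 < ((A.map ofReal).moebius z).im := by
  have hj := denom_map_ofReal_ne_zero hA.ne' hz
  have him : ((A.map ofReal).moebius z).im = A.det * z.im / normSq ((A.map ofReal).denom z) := by
    simp only [moebius, map_apply, denom, div_im, add_im, mul_im, ofReal_re, ofReal_im, zero_mul,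
      add_zero, add_re, mul_re, sub_zero, normSq_apply, det_fin_two]
    ring
  rw [him]
  have := normSq_pos.mpr hj
  positivity

end Matrix

theorem sum_range_choose_mul_choose_pow_mul {R : Type*} [CommSemiring R] (n : ℕ) (a b : R)
    (F : ℕ → R) :
    ∑ i ∈ range (n + 1), ∑ j ∈ range (n - i + 1),
        (n.choose i : R) * (n - i).choose j * a ^ i * b ^ j * F (i + j) =
      ∑ k ∈ range (n + 1), (n.choose k : R) * (a + b) ^ k * F k := by
  calc _ = ∑ k ∈ range (n + 1), ∑ i ∈ range (k + 1),
        (n.choose i : R) * (n - i).choose (k - i) * a ^ i * b ^ (k - i) * F (i + (k - i)) := by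
        rw [sum_range_diag_flip (n + 1) (fun i j =>
          (n.choose i : R) * (n - i).choose j * a ^ i * b ^ j * F (i + j))]
        refine sum_congr rfl fun i hi => ?_
        rw [Nat.sub_add_comm (by simpa [Nat.lt_succ_iff] using hi)]
    _ = _ := by
        refine sum_congr rfl fun k _ => ?_
        rw [add_pow, mul_sum, sum_mul]
        refine sum_congr rfl fun i hi => ?_
        have hik : i ≤ k := Nat.lt_succ_iff.mp (mem_range.mp hi)
        have hchoose : (n.choose i : R) * (n - i).choose (k - i) = n.choose k * k.choose i := by
          rw [← Nat.cast_mul, ← Nat.cast_mul, Nat.choose_mul hik]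
        rw [Nat.add_sub_cancel' hik, hchoose]
        ring

theorem zpow_sub_mul_zpow_sub_sub {K : Type*} [Field K] {u v : K} (hu : u ≠ 0) (hv : v ≠ 0)
    (m : ℤ) (i j : ℕ) :
    (v * u) ^ ((i : ℤ) - m) * v ^ (m - 2 * (i : ℤ) - j) = (u / v) ^ i * v⁻¹ ^ j * u ^ (-m) := by
  have h2 : (2 : ℤ) * i = ((2 * i : ℕ) : ℤ) := by push_cast; ring
  rw [mul_zpow, zpow_sub₀ hv, zpow_sub₀ hu, zpow_sub₀ hv, zpow_sub₀ hv, h2, zpow_neg, inv_pow,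
    div_pow]
  simp only [zpow_natCast]
  field_simp
  ring

theorem sum_choose_mul_sum_choose_zpow {K : Type*} [Field K] (n : ℕ) (m : ℤ) (F : ℕ → K)
    {u v x γ y : K} (hu : u ≠ 0) (hv : v ≠ 0) (hxy : x * u + γ = y * u * v) :
    ∑ i ∈ range (n + 1), (n.choose i : K) * x ^ i * (v * u) ^ ((i : ℤ) - m) *
        ∑ j ∈ range (n - i + 1),
          ((n - i).choose j : K) * γ ^ j * v ^ (m - 2 * (i : ℤ) - j) * F (i + j) =
      ∑ k ∈ range (n + 1), (n.choose k : K) * y ^ k * u ^ ((k : ℤ) - m) * F k := by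
  have hsum : x * u / v + γ * v⁻¹ = y * u := by
    field_simp
    linear_combination hxy
  calc _ = ∑ i ∈ range (n + 1), ∑ j ∈ range (n - i + 1), (n.choose i : K) * (n - i).choose j *
        (x * u / v) ^ i * (γ * v⁻¹) ^ j * (u ^ (-m) * F (i + j)) := by
        refine sum_congr rfl fun i _ => ?_
        rw [mul_sum]
        refine sum_congr rfl fun j _ => ?_
        rw [mul_div_assoc, mul_pow, mul_pow]
        linear_combination (n.choose i * (n - i).choose j * x ^ i * γ ^ j * F (i + j) : K) *
          zpow_sub_mul_zpow_sub_sub hu hv m i j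
    _ = ∑ k ∈ range (n + 1), (n.choose k : K) * (y * u) ^ k * (u ^ (-m) * F k) := by
        rw [sum_range_choose_mul_choose_pow_mul n _ _ (fun k => u ^ (-m) * F k), hsum]
    _ = _ := by
        refine sum_congr rfl fun k _ => ?_
        rw [mul_pow, zpow_sub₀ hu, zpow_natCast, zpow_neg]
        ring

theorem dslash_eq_sum (n : ℕ) (m : ℤ) (f : ℕ → ℂ → ℂ) (A : Matrix (Fin 2) (Fin 2) ℝ) (z : ℂ) :
    dslash n m f A z = (A.map ofReal).det ^ (m - n - 1) *
      ∑ i ∈ range (n + 1), (n.choose i : ℂ) * (-(A.map ofReal) 1 0 / (A.map ofReal).det) ^ i *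
        (A.map ofReal).denom z ^ ((i : ℤ) - m) * f i ((A.map ofReal).moebius z) := by
  rw [dslash, ofReal_det]
  rfl

theorem IsCocycleSystem.apply_moebius {n : ℕ} {m : ℤ} {f : ℕ → ℂ → ℂ}
    (hf : IsCocycleSystem n m f) {B : Matrix (Fin 2) (Fin 2) ℤ} (hB : B.det = 1) {i : ℕ}
    (hi : i ≤ n) {w : ℂ} (hw : 0 < w.im) :
    f i ((B.map (Int.cast : ℤ → ℂ)).moebius w) =
      ∑ j ∈ range (n - i + 1), ((n - i).choose j : ℂ) * B.map (Int.cast : ℤ → ℂ) 1 0 ^ j *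
        (B.map (Int.cast : ℤ → ℂ)).denom w ^ (m - 2 * (i : ℤ) - j) * f (i + j) w :=
  hf.2 B hB i hi w hw

/-- for a cocycle system of depth `n` and weight `m`, any `A ∈ GL⁺(2,ℝ)`
and any `B ∈ SL(2,ℤ)`, one has `f‖_m A = f‖_m (BA)` on the upper half plane. -/
theorem dslash_left_SL2Z_invariant (n : ℕ) (m : ℤ) (f : ℕ → ℂ → ℂ)
    (hf : IsCocycleSystem n m f)
    (A : Matrix (Fin 2) (Fin 2) ℝ) (hA : 0 < A.det)
    (B : Matrix (Fin 2) (Fin 2) ℤ) (hB : B.det = 1)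
    (z : ℂ) (hz : 0 < z.im) :
    dslash n m f A z = dslash n m f (B.map (Int.cast : ℤ → ℝ) * A) z := by
  set M := A.map ofReal
  set N := B.map (Int.cast : ℤ → ℂ)
  have hN : N = (B.map (Int.cast : ℤ → ℝ)).map ofReal := by ext; simp [N]
  have hNM : (B.map (Int.cast : ℤ → ℝ) * A).map ofReal = N * M := by
    ext i j
    simp [N, M, Matrix.mul_apply]
  have hdetN : N.det = 1 := by rw [← Int.cast_det, hB, Int.cast_one]
  have hdetM : M.det ≠ 0 := by rw [← ofReal_det]; exact_mod_cast hA.ne'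
  have hjM : M.denom z ≠ 0 := Matrix.denom_map_ofReal_ne_zero hA.ne' hz
  have hw : 0 < (M.moebius z).im := Matrix.im_moebius_map_ofReal_pos hA hz
  have hjN : N.denom (M.moebius z) ≠ 0 := by
    rw [hN]
    refine Matrix.denom_map_ofReal_ne_zero ?_ hw
    rw [← Int.cast_det, hB, Int.cast_one]
    exact one_ne_zero
  have hkey : -(N * M) 1 0 / M.det * M.denom z + N 1 0 =
      -M 1 0 / M.det * M.denom z * N.denom (M.moebius z) := by
    rw [mul_assoc _ (M.denom z), mul_comm (M.denom z), ← Matrix.denom_mul N M hjM]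
    field_simp
    linear_combination N.one_zero_mul_det_sub_mul_denom M z
  rw [dslash_eq_sum, dslash_eq_sum, hNM, Matrix.det_mul, hdetN, one_mul,
    Matrix.moebius_mul N M hjM, Matrix.denom_mul N M hjM,
    ← sum_choose_mul_sum_choose_zpow n m (fun k => f k (M.moebius z)) hjM hjN hkey]
  refine congrArg _ (sum_congr rfl fun i hi => ?_)
  rw [hf.apply_moebius hB (Nat.lt_succ_iff.mp (mem_range.mp hi)) hw]
end

section
/- Let (f_0, …, f_n) be a cocycle system of depth n and weight m, and let (h_0, …, h_{n'}) be a cocycle system of depth n' and weight m'. Define p_k := binom(n+n', k)^{−1} · Σ_{i+j=k, 0≤i≤n, 0≤j≤n'} binom(n,i)·binom(n',j)·f_i·h_j for 0 ≤ k ≤ n+n'. Then (p_0, …, p_{n+n'}) is a cocycle system of depth n+n' and weight m+m', and p_0 = f_0·h_0. (Hence the product of an M^n_m-function and an M^{n'}_{m'}-function is an M^{n+n'}_{m+m'}-function.) -/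
open Complex Finset

/-!
Encode a tuple `(a₀, …, aₙ)` by the polynomial `∑ binom(n, i) aᵢ Xⁱ`. Since
`binom(n, i) binom(n - i, j) = binom(n, i + j) binom(i + j, i)`, the transformation rule at `A` and
`z` says exactly that the polynomial of `(fᵢ(Az))` is `wᵐ` times the polynomial of `(fᵢ(z))`
evaluated at `(X + c w) / w²`, where `w = cz + d`. The `p_k` are the coefficients of the product
of the polynomials of `f` and `h`, and substitution is multiplicative, so `p` obeys the rule with
weight `m + m'`.
-/

open Polynomial

section BinomPoly

variable {R : Type*} [CommSemiring R]

noncomputable def binomPoly (n : ℕ) (a : ℕ → R) : R[X] :=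
  ∑ i ∈ range (n + 1), monomial i ((n.choose i : R) * a i)

theorem coeff_binomPoly (n : ℕ) (a : ℕ → R) (i : ℕ) :
    (binomPoly n a).coeff i = n.choose i * a i := by
  simp only [binomPoly, finsetSum_coeff, coeff_monomial, sum_ite_eq', mem_range]
  split_ifs with hi
  · rfl
  · rw [Nat.choose_eq_zero_of_lt (by omega), Nat.cast_zero, zero_mul]

theorem natDegree_binomPoly_le (n : ℕ) (a : ℕ → R) : (binomPoly n a).natDegree ≤ n :=
  natDegree_sum_le_of_forall_le _ _ fun _ hi =>
    (natDegree_monomial_le _).trans (Nat.lt_succ_iff.mp (mem_range.mp hi))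

end BinomPoly

section CocycleLaw

variable {K : Type*} [Field K]

noncomputable def binomProd (n n' : ℕ) (a b : ℕ → K) (k : ℕ) : K :=
  ((n + n').choose k : K)⁻¹ *
    ∑ i ∈ range (k + 1), (n.choose i : K) * (n'.choose (k - i) : K) * a i * b (k - i)

theorem binomPoly_binomProd [CharZero K] (n n' : ℕ) (a b : ℕ → K) :
    binomPoly (n + n') (binomProd n n' a b) = binomPoly n a * binomPoly n' b := by
  ext k
  rw [coeff_binomPoly, binomProd]
  rcases le_or_gt k (n + n') with hk | hk
  · rw [mul_inv_cancel_left₀ (Nat.cast_ne_zero.mpr (Nat.choose_pos hk).ne'), coeff_mul,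
      Finset.Nat.sum_antidiagonal_eq_sum_range_succ_mk]
    refine sum_congr rfl fun i _ => ?_
    rw [coeff_binomPoly, coeff_binomPoly]
    ring
  · rw [Nat.choose_eq_zero_of_lt hk, Nat.cast_zero, zero_mul, coeff_eq_zero_of_natDegree_lt]
    exact (natDegree_mul_le.trans (add_le_add (natDegree_binomPoly_le n a)
      (natDegree_binomPoly_le n' b))).trans_lt hk

theorem coeff_binomPoly_comp (n : ℕ) (m : ℤ) (c : K) {w : K} (hw : w ≠ 0) (a : ℕ → K)
    (i : ℕ) :
    (C (w ^ m) * (binomPoly n a).comp (C (w ^ 2)⁻¹ * (X + C (c * w)))).coeff i =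
      n.choose i * ∑ j ∈ range (n - i + 1),
        ((n - i).choose j : K) * c ^ j * w ^ (m - 2 * (i : ℤ) - (j : ℤ)) * a (i + j) := by
  rw [coeff_C_mul, binomPoly, Polynomial.sum_comp, finsetSum_coeff, mul_sum]
  simp only [monomial_comp, mul_pow, ← C_pow, ← mul_assoc, ← C_mul, coeff_C_mul,
    coeff_X_add_C_pow]
  rcases le_or_gt i n with hi | hi
  -- only the terms `s = i + j` contribute, as `s.choose i = 0` for `s < i`
  · rw [← sum_range_add_sum_Ico _ (by omega : i ≤ n + 1), sum_Ico_eq_sum_range,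
      show n + 1 - i = n - i + 1 by omega, mul_sum,
      sum_eq_zero fun s hs => by rw [Nat.choose_eq_zero_of_lt (mem_range.mp hs)]; simp, zero_add]
    refine sum_congr rfl fun j _ => ?_
    have hchoose : (n.choose (i + j) : K) * (i + j).choose i = n.choose i * (n - i).choose j := by
      have := Nat.choose_mul (n := n) (Nat.le_add_right i j)
      rw [Nat.add_sub_cancel_left] at this
      rw [← Nat.cast_mul, ← Nat.cast_mul, this]
    have hpow : w ^ m * ((w ^ 2)⁻¹) ^ (i + j) * w ^ j = w ^ (m - 2 * (i : ℤ) - (j : ℤ)) := by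
      rw [← zpow_natCast, ← zpow_natCast w j, ← zpow_neg_one, ← zpow_natCast, ← zpow_mul,
        ← zpow_mul, ← zpow_add₀ hw, ← zpow_add₀ hw]
      congr 1
      push_cast
      ring
    rw [Nat.add_sub_cancel_left, ← hpow]
    linear_combination (w ^ m * ((w ^ 2)⁻¹) ^ (i + j) * c ^ j * w ^ j * a (i + j)) * hchoose
  · rw [Nat.choose_eq_zero_of_lt hi, Nat.cast_zero, zero_mul]
    exact sum_eq_zero fun s hs => by
      rw [Nat.choose_eq_zero_of_lt ((Nat.lt_succ_iff.mp (mem_range.mp hs)).trans_lt hi)]; simp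

/-- The transformation rule of `IsCocycleSystem` at `A` and `z`, with `c = A 1 0` and
`w = c z + A 1 1`, for `a = (f · z)` and `b = (f · (A z))`. -/
def CocycleLaw (n : ℕ) (m : ℤ) (c w : K) (a b : ℕ → K) : Prop :=
  ∀ i ≤ n, b i = ∑ j ∈ range (n - i + 1),
    ((n - i).choose j : K) * c ^ j * w ^ (m - 2 * (i : ℤ) - (j : ℤ)) * a (i + j)

theorem cocycleLaw_iff [CharZero K] {n : ℕ} {m : ℤ} {c w : K} (hw : w ≠ 0) {a b : ℕ → K} :
    CocycleLaw n m c w a b ↔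
      binomPoly n b = C (w ^ m) * (binomPoly n a).comp (C (w ^ 2)⁻¹ * (X + C (c * w))) := by
  simp only [Polynomial.ext_iff, coeff_binomPoly, coeff_binomPoly_comp n m c hw]
  refine ⟨fun h i => ?_, fun h i hi => mul_left_cancel₀ ?_ (h i)⟩
  · rcases le_or_gt i n with hi | hi
    · rw [h i hi]
    · rw [Nat.choose_eq_zero_of_lt hi, Nat.cast_zero, zero_mul, zero_mul]
  · exact Nat.cast_ne_zero.mpr (Nat.choose_pos hi).ne'

theorem CocycleLaw.binomProd [CharZero K] {n n' : ℕ} {m m' : ℤ} {c w : K} (hw : w ≠ 0)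
    {a b a' b' : ℕ → K} (h : CocycleLaw n m c w a b) (h' : CocycleLaw n' m' c w a' b') :
    CocycleLaw (n + n') (m + m') c w (binomProd n n' a a') (binomProd n n' b b') := by
  rw [cocycleLaw_iff hw] at h h' ⊢
  rw [binomPoly_binomProd, binomPoly_binomProd, h, h', mul_comp, zpow_add₀ hw, C_mul (a := w ^ m)]
  ring

end CocycleLaw

theorem denom_ne_zero_of_det_eq_one {A : Matrix (Fin 2) (Fin 2) ℤ} (hA : A.det = 1) {z : ℂ}
    (hz : 0 < z.im) :
    (A 1 0 : ℂ) * z + (A 1 1 : ℂ) ≠ 0 := by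
  intro H
  have hc : A 1 0 = 0 := by
    have him : (A 1 0 : ℝ) * z.im = 0 := by simpa using congrArg im H
    exact_mod_cast (mul_eq_zero.mp him).resolve_right hz.ne'
  have hd : A 1 1 = 0 := by simpa [hc] using H
  simp [Matrix.det_fin_two, hc, hd] at hA

theorem IsCocycleSystem.differentiableOn_choose_mul {n : ℕ} {m : ℤ} {f : ℕ → ℂ → ℂ}
    (hf : IsCocycleSystem n m f) (i : ℕ) :
    DifferentiableOn ℂ (fun z => (n.choose i : ℂ) * f i z) {z : ℂ | 0 < z.im} := by
  rcases le_or_gt i n with hi | hi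
  · exact (hf.1 i hi).const_mul _
  · simp [Nat.choose_eq_zero_of_lt hi, differentiableOn_const]

/-- the (suitably binomially weighted) product of a cocycle system of depth `n`
and weight `m` with one of depth `n'` and weight `m'` is a cocycle system of depth `n+n'`
and weight `m+m'`, whose zeroth member is the product of the zeroth members. -/
theorem cocycleSystem_mul (n n' : ℕ) (m m' : ℤ) (f h : ℕ → ℂ → ℂ)
    (hf : IsCocycleSystem n m f) (hh : IsCocycleSystem n' m' h) :
    IsCocycleSystem (n + n') (m + m')
      (fun k z => (((n + n').choose k : ℂ))⁻¹ *
        ∑ i ∈ Finset.range (k + 1),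
          (n.choose i : ℂ) * (n'.choose (k - i) : ℂ) * f i z * h (k - i) z) ∧
    ∀ z : ℂ, ((((n + n').choose 0 : ℂ))⁻¹ *
        ∑ i ∈ Finset.range (0 + 1),
          (n.choose i : ℂ) * (n'.choose (0 - i) : ℂ) * f i z * h (0 - i) z) =
      f 0 z * h 0 z := by
  refine ⟨⟨fun k _ => ?_, fun A hA k hk z hz => ?_⟩, fun z => by simp⟩
  · refine DifferentiableOn.const_mul (DifferentiableOn.fun_sum fun i _ => ?_) _
    exact ((hf.differentiableOn_choose_mul i).fun_mul
      (hh.differentiableOn_choose_mul (k - i))).congr fun z _ => by ring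
  · exact CocycleLaw.binomProd (a := (f · z)) (a' := (h · z))
      (denom_ne_zero_of_det_eq_one hA hz) (fun i hi => hf.2 A hA i hi z hz)
      (fun i hi => hh.2 A hA i hi z hz) k hk
end

section
/- Let (f_0, …, f_n) be a cocycle system of depth n and weight m. For 0 ≤ i ≤ n+1 define f̃_i := (i(m−i+1)/(n+1))·f_{i−1} + ((n+1−i)/(n+1))·(d f_i/dz), with the conventions f_{−1} = f_{n+1} = 0. Then (f̃_0, …, f̃_{n+1}) is a cocycle system of depth n+1 and weight m+2, with f̃_0 = d f_0/dz. Moreover, for every A ∈ GL⁺(2,ℝ), d/dz (f||_m A) = (f')||_{m+2} A, where f' := d f_0/dz and the double-slash on the right is taken with respect to the system (f̃_0, …, f̃_{n+1}). (Hence differentiation maps M^n_m to M^{n+1}_{m+2}.) -/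
open Complex Finset

/-- The system of derivatives `f̃ᵢ = (i(m-i+1)/(n+1)) f_{i-1} + ((n+1-i)/(n+1)) fᵢ'`.
(For `i = 0` and `i = n+1` the coefficient of the undefined term vanishes, implementing the
conventions `f₋₁ = f_{n+1} = 0`.) -/
noncomputable def derivSystem (n : ℕ) (m : ℤ) (f : ℕ → ℂ → ℂ) : ℕ → ℂ → ℂ :=
  fun i z =>
    ((i : ℂ) * ((m : ℂ) - (i : ℂ) + 1) / ((n : ℂ) + 1)) * f (i - 1) z +
      (((n : ℂ) + 1 - (i : ℂ)) / ((n : ℂ) + 1)) * deriv (f i) z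

/-!
Differentiate the transformation law of `f i` under `A ∈ SL(2,ℤ)`: by the chain rule the left
side becomes `f i' (Az) / (cz+d)²`, and the right side produces the derivatives of the
automorphy factors `(cz+d)^(m-2i-j)`. Adding the transformation law of `f (i-1)` and shifting the
summation index, the coefficients of `f (i+j)` and of `f (i+j)'` on both sides agree by the
binomial identities `(j+1) C(N+1,j+1) = (N+1) C(N,j)` and `(N+1-j) C(N+1,j) = (N+1) C(N,j)`.
Differentiating the sum defining `f‖_m A` term by term and regrouping in the same way gives
`f'‖_{m+2} A`.
-/

lemma mobius_denom_ne_zero {a b c d : ℝ} (hdet : a * d - b * c ≠ 0) {z : ℂ} (hz : 0 < z.im) :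
    (c : ℂ) * z + d ≠ 0 := by
  refine UpperHalfPlane.linear_ne_zero_of_im (cd := ![c, d]) hz.ne' fun h => hdet ?_
  simp [show c = 0 from congrFun h 0, show d = 0 from congrFun h 1]

lemma im_mobius (a b c d : ℝ) (z : ℂ) :
    (((a : ℂ) * z + b) / ((c : ℂ) * z + d)).im =
      (a * d - b * c) * z.im / normSq ((c : ℂ) * z + d) := by
  simp only [div_im, add_im, add_re, mul_im, mul_re, ofReal_re, ofReal_im, ← sub_div]
  ring

lemma im_mobius_pos {a b c d : ℝ} (hdet : 0 < a * d - b * c) {z : ℂ} (hz : 0 < z.im) :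
    0 < (((a : ℂ) * z + b) / ((c : ℂ) * z + d)).im := by
  rw [im_mobius]
  exact div_pos (mul_pos hdet hz) (normSq_pos.2 (mobius_denom_ne_zero hdet.ne' hz))

lemma hasDerivAt_mobius (a b c d : ℂ) {z : ℂ} (hz : c * z + d ≠ 0) :
    HasDerivAt (fun x => (a * x + b) / (c * x + d)) ((a * d - b * c) / (c * z + d) ^ 2) z := by
  have hlin (u v : ℂ) : HasDerivAt (fun x => u * x + v) u z := by
    simpa using ((hasDerivAt_id z).const_mul u).add_const v
  exact ((hlin a b).fun_div (hlin c d) hz).congr_deriv (by ring)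

lemma hasDerivAt_comp_mobius {g : ℂ → ℂ} (a b c d : ℂ) {z : ℂ} (hz : c * z + d ≠ 0)
    (hg : DifferentiableAt ℂ g ((a * z + b) / (c * z + d))) :
    HasDerivAt (fun x => g ((a * x + b) / (c * x + d)))
      (deriv g ((a * z + b) / (c * z + d)) * ((a * d - b * c) / (c * z + d) ^ 2)) z :=
  hg.hasDerivAt.comp z (hasDerivAt_mobius a b c d hz)

lemma hasDerivAt_sum_mul_zpow_mul (s : Finset ℕ) (K : ℕ → ℂ) (E : ℕ → ℤ) {g : ℕ → ℂ → ℂ}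
    {g' : ℕ → ℂ} {c d z : ℂ} (hz : c * z + d ≠ 0) (hg : ∀ j ∈ s, HasDerivAt (g j) (g' j) z) :
    HasDerivAt (fun x => ∑ j ∈ s, K j * (c * x + d) ^ E j * g j x)
      (∑ j ∈ s, (K j * (E j * c * (c * z + d) ^ (E j - 1)) * g j z +
        K j * (c * z + d) ^ E j * g' j)) z := by
  refine HasDerivAt.fun_sum fun j hj => ?_
  have hlin : HasDerivAt (fun x => c * x + d) c z := by
    simpa using ((hasDerivAt_id z).const_mul c).add_const d
  have hpow := (hasDerivAt_zpow (E j) _ (Or.inl hz)).comp z hlin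
  exact ((hpow.const_mul (K j)).mul (hg j hj)).congr_deriv (by simp only [Function.comp]; ring)

lemma sum_range_add_eq_add_sum_shift {M : Type*} [AddCommMonoid M] (N : ℕ) (a b : ℕ → M)
    (hb : b (N + 1) = 0) :
    ∑ j ∈ range (N + 1 + 1), (a j + b j) = a 0 + ∑ j ∈ range (N + 1), (a (j + 1) + b j) := by
  rw [sum_add_distrib, sum_add_distrib, sum_range_succ' a, sum_range_succ b, hb, add_zero]
  abel

lemma cast_add_one_mul_choose {R : Type*} [CommRing R] (N j : ℕ) :
    ((j : R) + 1) * (N + 1).choose (j + 1) = (N + 1) * N.choose j := by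
  have h := congrArg (Nat.cast (R := R)) (Nat.add_one_mul_choose_eq N j)
  push_cast at h
  linear_combination -h

lemma cast_sub_mul_choose {R : Type*} [CommRing R] {N j : ℕ} (hj : j ≤ N + 1) :
    ((N : R) + 1 - j) * (N + 1).choose j = (N + 1) * N.choose j := by
  have h := congrArg (Nat.cast (R := R)) (Nat.choose_mul_succ_eq N j)
  push_cast [Nat.cast_sub hj] at h
  linear_combination -h

lemma add_one_div_mul_choose {K : Type*} [Field K] [CharZero K] (n i : ℕ) :
    ((i : K) + 1) / (n + 1) * (n + 1).choose (i + 1) = n.choose i := by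
  rw [div_mul_eq_mul_div, div_eq_iff (Nat.cast_add_one_ne_zero n)]
  linear_combination cast_add_one_mul_choose (R := K) n i

lemma sub_div_mul_choose {K : Type*} [Field K] [CharZero K] {n i : ℕ} (hi : i ≤ n + 1) :
    ((n : K) + 1 - i) / (n + 1) * (n + 1).choose i = n.choose i := by
  rw [div_mul_eq_mul_div, div_eq_iff (Nat.cast_add_one_ne_zero n)]
  linear_combination cast_sub_mul_choose (R := K) hi

lemma derivSystem_zero (n : ℕ) (m : ℤ) (f : ℕ → ℂ → ℂ) (z : ℂ) :
    derivSystem n m f 0 z = deriv (f 0) z := by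
  simp [derivSystem, div_self (Nat.cast_add_one_ne_zero n : (n : ℂ) + 1 ≠ 0)]

lemma derivSystem_succ_self (n : ℕ) (m : ℤ) (f : ℕ → ℂ → ℂ) (z : ℂ) :
    derivSystem n m f (n + 1) z = ((m : ℂ) - n) * f n z := by
  simp only [derivSystem, Nat.add_sub_cancel, Nat.cast_add_one, sub_self, zero_div, zero_mul,
    add_zero]
  rw [mul_div_cancel_left₀ _ (Nat.cast_add_one_ne_zero n)]
  ring

lemma differentiableOn_derivSystem {n : ℕ} (m : ℤ) {f : ℕ → ℂ → ℂ}
    (hf : ∀ i ≤ n, DifferentiableOn ℂ (f i) {z | 0 < z.im}) {i : ℕ} (hi : i ≤ n + 1) :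
    DifferentiableOn ℂ (derivSystem n m f i) {z | 0 < z.im} := by
  rcases hi.lt_or_eq with hi | rfl
  · exact ((hf (i - 1) (by omega)).const_mul _).add
      (((hf i (by omega)).deriv UpperHalfPlane.isOpen_upperHalfPlaneSet).const_mul _)
  · exact ((hf n le_rfl).const_mul _).congr fun z _ => derivSystem_succ_self n m f z

lemma deriv_comp_mobius_eq_sum {g : ℂ → ℂ} {h : ℕ → ℂ → ℂ} {a b c d z : ℂ} (N : ℕ) (k : ℤ)
    (hdet : a * d - b * c = 1) (hz : c * z + d ≠ 0)
    (hg : DifferentiableAt ℂ g ((a * z + b) / (c * z + d)))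
    (hh : ∀ j ≤ N, DifferentiableAt ℂ (h j) z)
    (hgh : (fun x => g ((a * x + b) / (c * x + d))) =ᶠ[nhds z]
      fun x => ∑ j ∈ range (N + 1), (N.choose j : ℂ) * c ^ j * (c * x + d) ^ (k - j) * h j x) :
    deriv g ((a * z + b) / (c * z + d)) =
      ∑ j ∈ range (N + 1), (N.choose j : ℂ) * c ^ j *
        (((k - j : ℤ) : ℂ) * c * (c * z + d) ^ (k + 1 - j) * h j z +
          (c * z + d) ^ (k + 2 - j) * deriv (h j) z) := by
  have hlhs := hasDerivAt_comp_mobius a b c d hz hg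
  have hrhs := hasDerivAt_sum_mul_zpow_mul (range (N + 1)) (fun j => (N.choose j : ℂ) * c ^ j)
    (fun j => k - j) hz fun j hj => (hh j (Nat.lt_succ_iff.1 (mem_range.1 hj))).hasDerivAt
  have hderiv := (hlhs.congr_of_eventuallyEq hgh.symm).unique hrhs
  rw [hdet] at hderiv
  have hJ2 : (c * z + d) ^ 2 ≠ 0 := pow_ne_zero 2 hz
  calc deriv g ((a * z + b) / (c * z + d))
      = deriv g ((a * z + b) / (c * z + d)) * (1 / (c * z + d) ^ 2) * (c * z + d) ^ 2 := by
        rw [mul_one_div, div_mul_cancel₀ _ hJ2]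
    _ = _ := by
      rw [hderiv, sum_mul]
      refine sum_congr rfl fun j _ => ?_
      rw [show k + 1 - j = k - j - 1 + (2 : ℕ) by push_cast; ring,
        show k + 2 - j = k - j + (2 : ℕ) by push_cast; ring, zpow_add₀ hz, zpow_add₀ hz,
        zpow_natCast]
      ring

lemma apply_mobius_pred_eq_sum {n : ℕ} {m : ℤ} {f : ℕ → ℂ → ℂ} {a b c d z : ℂ} (hz : 0 < z.im)
    (hlaw : ∀ i ≤ n, ∀ x : ℂ, 0 < x.im → f i ((a * x + b) / (c * x + d)) =
      ∑ j ∈ range (n - i + 1), ((n - i).choose j : ℂ) * c ^ j *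
        (c * x + d) ^ (m - 2 * (i : ℤ) - (j : ℤ)) * f (i + j) x)
    {i : ℕ} (hi0 : 0 < i) (hi : i ≤ n) :
    f (i - 1) ((a * z + b) / (c * z + d)) =
      ∑ j ∈ range (n - i + 1 + 1), ((n - i + 1).choose j : ℂ) * c ^ j *
        (c * z + d) ^ (m + 2 - 2 * (i : ℤ) - j) * f (i + j - 1) z := by
  rw [hlaw (i - 1) (by omega) z hz, show n - (i - 1) = n - i + 1 by omega]
  refine sum_congr rfl fun j _ => ?_
  rw [show i - 1 + j = i + j - 1 by omega,
    show m - 2 * ((i - 1 : ℕ) : ℤ) - j = m + 2 - 2 * (i : ℤ) - j by omega]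

lemma derivSystem_apply_mobius {n : ℕ} {m : ℤ} {f : ℕ → ℂ → ℂ} {a b c d z : ℂ}
    (hdet : a * d - b * c = 1) (hz : 0 < z.im) (hJ : c * z + d ≠ 0)
    (hAz : 0 < ((a * z + b) / (c * z + d)).im)
    (hf : ∀ i ≤ n, DifferentiableOn ℂ (f i) {z | 0 < z.im})
    (hlaw : ∀ i ≤ n, ∀ x : ℂ, 0 < x.im → f i ((a * x + b) / (c * x + d)) =
      ∑ j ∈ range (n - i + 1), ((n - i).choose j : ℂ) * c ^ j *
        (c * x + d) ^ (m - 2 * (i : ℤ) - (j : ℤ)) * f (i + j) x)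
    {i : ℕ} (hi : i ≤ n) :
    derivSystem n m f i ((a * z + b) / (c * z + d)) =
      ∑ j ∈ range (n + 1 - i + 1), ((n + 1 - i).choose j : ℂ) * c ^ j *
        (c * z + d) ^ (m + 2 - 2 * (i : ℤ) - (j : ℤ)) * derivSystem n m f (i + j) z := by
  obtain ⟨N, rfl⟩ : ∃ N, n = i + N := ⟨n - i, by omega⟩
  have hdiffAt {k : ℕ} (hk : k ≤ i + N) {x : ℂ} (hx : 0 < x.im) : DifferentiableAt ℂ (f k) x :=
    (hf k hk).differentiableAt (UpperHalfPlane.isOpen_upperHalfPlaneSet.mem_nhds hx)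
  have hprev : (i * ((m : ℂ) - i + 1) / ((i + N : ℕ) + 1)) * f (i - 1) ((a * z + b) / (c * z + d)) =
      ∑ j ∈ range (N + 1 + 1), (i * ((m : ℂ) - i + 1) / ((i + N : ℕ) + 1)) *
        ((N + 1).choose j * c ^ j * (c * z + d) ^ (m + 2 - 2 * (i : ℤ) - j) * f (i + j - 1) z) := by
    rcases Nat.eq_zero_or_pos i with rfl | hi0
    · simp
    rw [apply_mobius_pred_eq_sum hz hlaw hi0 hi, Nat.add_sub_cancel_left, mul_sum]
  have hcur : deriv (f i) ((a * z + b) / (c * z + d)) =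
      ∑ j ∈ range (N + 1), (N.choose j : ℂ) * c ^ j *
        (((m - 2 * i - j : ℤ) : ℂ) * c * (c * z + d) ^ (m - 2 * (i : ℤ) + 1 - j) * f (i + j) z +
          (c * z + d) ^ (m - 2 * (i : ℤ) + 2 - j) * deriv (f (i + j)) z) := by
    refine deriv_comp_mobius_eq_sum N (m - 2 * i) hdet hJ (hdiffAt hi hAz)
      (fun j hj => hdiffAt (by omega) hz) ?_
    filter_upwards [UpperHalfPlane.isOpen_upperHalfPlaneSet.mem_nhds hz] with x hx
    simpa using hlaw i hi x hx
  simp only [derivSystem]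
  rw [hprev, hcur, show i + N + 1 - i = N + 1 by omega]
  have hlast : ((i + N : ℕ) : ℂ) + 1 - ((i + (N + 1) : ℕ) : ℂ) = 0 := by push_cast; ring
  simp only [mul_add, mul_sum]
  rw [sum_range_add_eq_add_sum_shift N _ _ (by rw [hlast]; simp), sum_range_succ' _ (N + 1),
    add_comm _ (_ * _), add_assoc, ← sum_add_distrib]
  congr 1
  · simp
    ring
  refine sum_congr rfl fun j hj => ?_
  -- besides the binomial identities, this uses `i(m-i+1) + (j+1)(m-2i-j) = (i+j+1)(m-i-j)`
  rw [show i + (j + 1) - 1 = i + j by omega,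
    show m + 2 - 2 * (i : ℤ) - ((j + 1 : ℕ) : ℤ) = m - 2 * i + 1 - j by push_cast; ring,
    show m - 2 * (i : ℤ) + 2 - j = m + 2 - 2 * i - j by ring]
  have hα := cast_add_one_mul_choose (R := ℂ) N j
  have hβ := cast_sub_mul_choose (R := ℂ) (N := N) (j := j) (by rw [mem_range] at hj; omega)
  push_cast
  linear_combination
    (-((m : ℂ) - 2 * i - j) * c ^ (j + 1) * (c * z + d) ^ (m - 2 * (i : ℤ) + 1 - j) *
      f (i + j) z / (i + N + 1)) * hα -
    (c ^ j * (c * z + d) ^ (m + 2 - 2 * (i : ℤ) - j) * deriv (f (i + j)) z / (i + N + 1)) * hβ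

lemma isCocycleSystem_derivSystem {n : ℕ} {m : ℤ} {f : ℕ → ℂ → ℂ} (hf : IsCocycleSystem n m f) :
    IsCocycleSystem (n + 1) (m + 2) (derivSystem n m f) := by
  obtain ⟨hdiff, hlaw⟩ := hf
  refine ⟨fun i hi => differentiableOn_derivSystem m hdiff hi, fun A hA i hi z hz => ?_⟩
  have hdetR : (A 0 0 : ℝ) * A 1 1 - (A 0 1 : ℝ) * A 1 0 = 1 := by
    rw [Matrix.det_fin_two] at hA
    exact_mod_cast hA
  have hJ := mobius_denom_ne_zero (a := A 0 0) (b := A 0 1) (by rw [hdetR]; norm_num) hz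
  have hAz := im_mobius_pos (a := A 0 0) (b := A 0 1) (c := A 1 0) (d := A 1 1)
    (by rw [hdetR]; norm_num) hz
  push_cast at hJ hAz
  rcases hi.lt_or_eq with hi | rfl
  · exact derivSystem_apply_mobius (by exact_mod_cast hdetR) hz hJ hAz hdiff (hlaw A hA) (by omega)
  · have hn := hlaw A hA n le_rfl z hz
    rw [Nat.sub_self, sum_range_one] at hn ⊢
    rw [add_zero, derivSystem_succ_self, derivSystem_succ_self, hn, add_zero,
      show m + 2 - 2 * ((n + 1 : ℕ) : ℤ) = m - 2 * n by push_cast; ring]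
    ring

lemma dslash_deriv_summand_eq {n i : ℕ} (hi : i ≤ n) {m : ℤ} {Δ J : ℂ} (c F F' : ℂ)
    (hΔ : Δ ≠ 0) (hJ : J ≠ 0) :
    Δ ^ (m - n - 1) * (n.choose i * (-c / Δ) ^ i * ((i - m) * c * J ^ ((i : ℤ) - m - 1)) * F) +
        Δ ^ (m - n - 1) * (n.choose i * (-c / Δ) ^ i * J ^ ((i : ℤ) - m) * (F' * (Δ / J ^ 2))) =
      Δ ^ (m - n) * ((n + 1).choose (i + 1) * (-c / Δ) ^ (i + 1) * J ^ ((i : ℤ) - m - 1) *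
          ((i + 1) * (m - (i + 1) + 1) / (n + 1) * F)) +
        Δ ^ (m - n) * ((n + 1).choose i * (-c / Δ) ^ i * J ^ ((i : ℤ) - (m + 2)) *
          ((n + 1 - i) / (n + 1) * F')) := by
  have hJ2 : J ^ ((i : ℤ) - m) = J ^ ((i : ℤ) - (m + 2)) * J ^ 2 := by
    rw [← zpow_natCast, ← zpow_add₀ hJ]
    ring_nf
  have hΔ1 : Δ ^ (m - n) = Δ ^ (m - n - 1) * Δ := by
    rw [← zpow_add_one₀ hΔ]
    ring_nf
  rw [hJ2, hΔ1, pow_succ]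
  have hα := add_one_div_mul_choose (K := ℂ) n i
  have hβ := sub_div_mul_choose (K := ℂ) (n := n) (i := i) (by omega)
  have hc : Δ * (-c / Δ) = -c := by field_simp
  have hJΔ : J ^ 2 * (Δ / J ^ 2) = Δ := by field_simp
  set E := Δ ^ (m - (n : ℤ) - 1)
  set P := (-c / Δ) ^ i
  set K := J ^ ((i : ℤ) - m - 1)
  set L := J ^ ((i : ℤ) - (m + 2))
  linear_combination (E * P * K * F * c * (m - i)) * hα -
    (E * P * K * F * ((i + 1) * (m - i) / (n + 1)) * (n + 1).choose (i + 1)) * hc +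
    (E * n.choose i * P * L * F') * hJΔ - (E * Δ * P * L * F') * hβ

lemma deriv_dslash {n : ℕ} {m : ℤ} {f : ℕ → ℂ → ℂ}
    (hf : ∀ i ≤ n, DifferentiableOn ℂ (f i) {z | 0 < z.im})
    {A : Matrix (Fin 2) (Fin 2) ℝ} (hA : 0 < A.det) {z : ℂ} (hz : 0 < z.im) :
    deriv (dslash n m f A) z = dslash (n + 1) (m + 2) (derivSystem n m f) A z := by
  unfold dslash
  have hdet : A 0 0 * A 1 1 - A 0 1 * A 1 0 = A.det := (Matrix.det_fin_two A).symm
  have hdetC : (A 0 0 : ℂ) * A 1 1 - A 0 1 * A 1 0 = A.det := by exact_mod_cast hdet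
  have hΔ : (A.det : ℂ) ≠ 0 := ofReal_ne_zero.2 hA.ne'
  have hJ := mobius_denom_ne_zero (hdet ▸ hA.ne') hz
  have hAz := im_mobius_pos (hdet ▸ hA) hz
  set a : ℂ := (A 0 0 : ℂ)
  set b : ℂ := (A 0 1 : ℂ)
  set c : ℂ := (A 1 0 : ℂ)
  set d : ℂ := (A 1 1 : ℂ)
  set Δ : ℂ := (A.det : ℂ)
  have hF : ∀ i ∈ range (n + 1), HasDerivAt (fun x => f i ((a * x + b) / (c * x + d)))
      (deriv (f i) ((a * z + b) / (c * z + d)) * (Δ / (c * z + d) ^ 2)) z := fun i hi => by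
    rw [← hdetC]
    exact hasDerivAt_comp_mobius a b c d hJ <| (hf i (Nat.lt_succ_iff.1 (mem_range.1 hi)))
      |>.differentiableAt (UpperHalfPlane.isOpen_upperHalfPlaneSet.mem_nhds hAz)
  have hsum := (hasDerivAt_sum_mul_zpow_mul (range (n + 1))
    (fun i => (n.choose i : ℂ) * (-c / Δ) ^ i) (fun i => i - m) hJ hF).const_mul
      (Δ ^ (m - (n : ℤ) - 1))
  rw [hsum.deriv]
  simp only [derivSystem, mul_add, mul_sum]
  rw [sum_range_add_eq_add_sum_shift n _ _ (by simp)]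
  simp only [Nat.cast_zero, zero_mul, zero_add, zero_div, mul_zero]
  refine sum_congr rfl fun i hi => ?_
  rw [Nat.add_sub_cancel, show ((i + 1 : ℕ) : ℤ) - (m + 2) = i - m - 1 by push_cast; ring,
    show m + 2 - ((n + 1 : ℕ) : ℤ) - 1 = m - n by push_cast; ring]
  push_cast
  linear_combination dslash_deriv_summand_eq (Nat.lt_succ_iff.1 (mem_range.1 hi)) (m := m) c
    (f i ((a * z + b) / (c * z + d))) (deriv (f i) ((a * z + b) / (c * z + d))) hΔ hJ

/-- differentiation maps a cocycle system of depth `n` and weight `m` to one of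
depth `n+1` and weight `m+2`, with zeroth member the derivative of the zeroth member, and the
double slash operator commutes with differentiation. -/
theorem cocycleSystem_deriv (n : ℕ) (m : ℤ) (f : ℕ → ℂ → ℂ)
    (hf : IsCocycleSystem n m f) :
    IsCocycleSystem (n + 1) (m + 2) (derivSystem n m f) ∧
    (∀ z : ℂ, derivSystem n m f 0 z = deriv (f 0) z) ∧
    (∀ A : Matrix (Fin 2) (Fin 2) ℝ, 0 < A.det → ∀ z : ℂ, 0 < z.im →
      deriv (dslash n m f A) z = dslash (n + 1) (m + 2) (derivSystem n m f) A z) :=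
  ⟨isCocycleSystem_derivSystem hf, derivSystem_zero n m f,
    fun _ hA _ hz => deriv_dslash hf.1 hA hz⟩
end

section
/- Let C_1, C_2 : P → ℝ and C_3 : P → ℂ be functions such that for every z ∈ ℍ: C_1(z̃) = Im z, C_2(z̃) = 0, C_3(z̃) = 1, and for every x ∈ P and g = [[k_1,k_3],[0,k_2]] ∈ G_0: C_1(x·g) = C_1(x)·|k_1|², C_2(x·g) = C_1(x)·|k_3|² + C_2(x)·|k_2|² + Im(C_3(x)·k_3·conj(k_2)), and C_3(x·g) = C_3(x)·k_1·conj(k_2) + 2√(−1)·k_1·conj(k_3)·C_1(x). Then C_1(x) = Im(x_1·conj(x_3)), C_2(x) = Im(x_2·conj(x_4)) and C_3(x) = x_1·conj(x_4) − conj(x_2)·x_3 for all x ∈ P; i.e. the functions B_1, B_2, B_3 with these properties are unique. -/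
open Complex ComplexConjugate

/-!
Every `x ∈ P` factors as `x = z̃ * g` with `z = x₁ / x₃ ∈ ℍ` and `g ∈ G₀` (the entry
`k₂ = z x₄ - x₂` of `g` is nonzero because `det x = x₃ k₂`). The values of `C₁, C₂, C₃` at `z̃`
and their transformation law under `G₀` therefore determine them at `x`, and evaluating the
transformation law at `z̃` gives exactly `B₁, B₂, B₃`.
-/

theorem Complex.im_mul_mul_conj (z c : ℂ) : (z * c * conj c).im = z.im * ‖c‖ ^ 2 := by
  rw [mul_assoc, mul_conj, Complex.sq_norm, im_mul_ofReal]

theorem Matrix.eq_mul_upperTriangular_of_ne_zero {K : Type*} [Field K]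
    (x : Matrix (Fin 2) (Fin 2) K) (hc : x 1 0 ≠ 0) :
    x = !![x 0 0 / x 1 0, -1; 1, 0] * !![x 1 0, x 1 1; 0, x 0 0 / x 1 0 * x 1 1 - x 0 1] := by
  ext i j
  fin_cases i <;> fin_cases j <;> simp [Matrix.mul_apply, Fin.sum_univ_two, hc]

theorem exists_eq_upperHalfPlane_mul_upperTriangular (x : Matrix (Fin 2) (Fin 2) ℂ)
    (hdet : x.det ≠ 0) (hx : 0 < (x 0 0 * conj (x 1 0)).im) :
    ∃ z c d k : ℂ, 0 < z.im ∧ c ≠ 0 ∧ k ≠ 0 ∧ x = !![z, -1; 1, 0] * !![c, d; 0, k] := by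
  have hc : x 1 0 ≠ 0 := by
    rintro h
    simp [h] at hx
  have hfactor := x.eq_mul_upperTriangular_of_ne_zero hc
  refine ⟨_, _, _, _, ?_, hc, ?_, hfactor⟩
  · rw [← div_mul_cancel₀ (x 0 0) hc, im_mul_mul_conj] at hx
    exact pos_of_mul_pos_left hx (by positivity)
  · rw [hfactor, Matrix.det_mul] at hdet
    simp only [Matrix.det_fin_two_of, mul_zero, sub_zero] at hdet
    exact right_ne_zero_of_mul (right_ne_zero_of_mul hdet)

/-- uniqueness of the functions `B₁, B₂, B₃` on the period domain
`P = {x ∈ GL(2,ℂ) : Im(x₁ x̄₃) > 0}`: any `C₁, C₂ : P → ℝ`, `C₃ : P → ℂ` with the same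
restrictions to the embedded upper half plane and the same `G₀`-equivariance must equal
`Im(x₁ x̄₃)`, `Im(x₂ x̄₄)` and `x₁ x̄₄ − x̄₂ x₃` respectively. -/
theorem B_uniqueness
    (C₁ C₂ : Matrix (Fin 2) (Fin 2) ℂ → ℝ) (C₃ : Matrix (Fin 2) (Fin 2) ℂ → ℂ)
    (hres : ∀ z : ℂ, 0 < z.im →
      C₁ !![z, -1; 1, 0] = z.im ∧ C₂ !![z, -1; 1, 0] = 0 ∧ C₃ !![z, -1; 1, 0] = 1)
    (hact : ∀ x : Matrix (Fin 2) (Fin 2) ℂ, x.det ≠ 0 →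
      0 < (x 0 0 * (starRingEnd ℂ) (x 1 0)).im →
      ∀ k₁ k₂ k₃ : ℂ, k₁ ≠ 0 → k₂ ≠ 0 →
        C₁ (x * !![k₁, k₃; 0, k₂]) = C₁ x * ‖k₁‖ ^ 2 ∧
        C₂ (x * !![k₁, k₃; 0, k₂]) =
          C₁ x * ‖k₃‖ ^ 2 + C₂ x * ‖k₂‖ ^ 2 +
            (C₃ x * k₃ * (starRingEnd ℂ) k₂).im ∧
        C₃ (x * !![k₁, k₃; 0, k₂]) =
          C₃ x * k₁ * (starRingEnd ℂ) k₂ +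
            2 * Complex.I * k₁ * (starRingEnd ℂ) k₃ * (C₁ x : ℂ)) :
    ∀ x : Matrix (Fin 2) (Fin 2) ℂ, x.det ≠ 0 →
      0 < (x 0 0 * (starRingEnd ℂ) (x 1 0)).im →
      C₁ x = (x 0 0 * (starRingEnd ℂ) (x 1 0)).im ∧
      C₂ x = (x 0 1 * (starRingEnd ℂ) (x 1 1)).im ∧
      C₃ x = x 0 0 * (starRingEnd ℂ) (x 1 1) - (starRingEnd ℂ) (x 0 1) * x 1 0 := by
  intro x hdet hx
  obtain ⟨z, c, d, k, hz, hc, hk, rfl⟩ := exists_eq_upperHalfPlane_mul_upperTriangular x hdet hx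
  obtain ⟨h₁, h₂, h₃⟩ := hact !![z, -1; 1, 0] (by simp) (by simpa using hz) c k d hc hk
  obtain ⟨r₁, r₂, r₃⟩ := hres z hz
  rw [h₁, h₂, h₃, r₁, r₂, r₃]
  simp only [Matrix.mul_apply, Fin.sum_univ_two, Matrix.of_apply, Matrix.cons_val',
    Matrix.cons_val_zero, Matrix.cons_val_one, Matrix.empty_val', Matrix.cons_val_fin_one,
    one_mul, zero_mul, mul_zero, add_zero, neg_one_mul, ← sub_eq_add_neg]
  refine ⟨(im_mul_mul_conj z c).symm, ?_, ?_⟩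
  · simp only [Complex.sq_norm, normSq_apply, mul_im, mul_re, sub_re, sub_im, conj_re, conj_im]
    ring
  · have hsub := sub_conj z
    push_cast at hsub
    simp only [map_sub, map_mul]
    linear_combination (-c * conj d) * hsub
end

section
/- Every x = [[x_1,x_2],[x_3,x_4]] ∈ P can be written uniquely as x = z̃·g with z ∈ ℍ and g ∈ G_0; explicitly, x_3 ≠ 0, z = x_1/x_3 ∈ ℍ and g = [[x_3, x_4],[0, det(x)/x_3]]. -/
open Complex

/-- every point `x` of the period domain `P` factors uniquely as
`x = z̃ · g` with `z ∈ ℍ` and `g ∈ G₀`; explicitly `x₃ ≠ 0`, `z = x₁/x₃ ∈ ℍ` and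
`g = [[x₃, x₄],[0, det(x)/x₃]]`. -/
theorem period_domain_Iwasawa (x : Matrix (Fin 2) (Fin 2) ℂ)
    (hdet : x.det ≠ 0) (hP : 0 < (x 0 0 * (starRingEnd ℂ) (x 1 0)).im) :
    x 1 0 ≠ 0 ∧ 0 < (x 0 0 / x 1 0).im ∧
    x = !![x 0 0 / x 1 0, -1; 1, 0] * !![x 1 0, x 1 1; 0, x.det / x 1 0] ∧
    ∀ z k₁ k₃ k₂ : ℂ, 0 < z.im → k₁ ≠ 0 → k₂ ≠ 0 →
      x = !![z, -1; 1, 0] * !![k₁, k₃; 0, k₂] →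
      z = x 0 0 / x 1 0 ∧ k₁ = x 1 0 ∧ k₃ = x 1 1 ∧ k₂ = x.det / x 1 0 := by
  have h10 : x 1 0 ≠ 0 := by
    intro h
    rw [h] at hP
    simp at hP
  have hdet2 : x.det = x 0 0 * x 1 1 - x 0 1 * x 1 0 := by
    rw [Matrix.det_fin_two]
  have him : 0 < (x 0 0 / x 1 0).im := by
    have : (x 0 0 / x 1 0).im = (x 0 0 * (starRingEnd ℂ) (x 1 0)).im / Complex.normSq (x 1 0) := by
      rw [Complex.div_im, Complex.mul_im]
      simp [Complex.normSq_apply, Complex.conj_re, Complex.conj_im]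
      ring
    rw [this]
    exact div_pos hP (Complex.normSq_pos.mpr h10)
  refine ⟨h10, him, ?_, ?_⟩
  · ext i j
    fin_cases i <;> fin_cases j <;>
      simp [Matrix.mul_apply, Fin.sum_univ_two, hdet2] <;>
      field_simp <;> ring
  · intro z k₁ k₃ k₂ hz hk1 hk2 heq
    have e00 : x 0 0 = z * k₁ := by
      rw [heq]; simp [Matrix.mul_apply, Fin.sum_univ_two]
    have e01 : x 0 1 = z * k₃ - k₂ := by
      rw [heq]; simp [Matrix.mul_apply, Fin.sum_univ_two]; ring
    have e10 : x 1 0 = k₁ := by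
      rw [heq]; simp [Matrix.mul_apply, Fin.sum_univ_two]
    have e11 : x 1 1 = k₃ := by
      rw [heq]; simp [Matrix.mul_apply, Fin.sum_univ_two]
    refine ⟨?_, e10.symm, e11.symm, ?_⟩
    · rw [e00, e10]; field_simp
    · rw [hdet2, e00, e01, e10, e11]; field_simp; ring
end

section
/- Let f := y² − 4·t_0·(x − t_1)³ + t_2·(x − t_1) + t_3, viewed as an element of the polynomial ring ℂ[t_0, t_1, t_2, t_3, x, y]. Then there exists a natural number N such that t_0^N · (27·t_0·t_3² − t_2³) belongs to the ideal of ℂ[t_0, t_1, t_2, t_3, x, y] generated by f, ∂f/∂x and ∂f/∂y. (Equivalently, after inverting t_0, the discriminant Δ = t_0(27t_0t_3² − t_2³) annihilates the module V = Ω²_{relative}/(df∧Ω¹ + fΩ²) of the family of elliptic curves E_t : f = 0.) -/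
open MvPolynomial

/-- The defining polynomial `f = y² − 4t₀(x−t₁)³ + t₂(x−t₁) + t₃` of the family of
elliptic curves, in `ℂ[t₀,t₁,t₂,t₃,x,y]` (variables `0,…,3` are `t₀,…,t₃`, variable `4`
is `x`, variable `5` is `y`). -/
noncomputable def famPoly : MvPolynomial (Fin 6) ℂ :=
  (X 5) ^ 2 - 4 * X 0 * (X 4 - X 1) ^ 3 + X 2 * (X 4 - X 1) + X 3

lemma famPoly_pderiv_x :
    MvPolynomial.pderiv 4 famPoly = -12 * X 0 * (X 4 - X 1) ^ 2 + X 2 := by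
  unfold famPoly
  rw [show (4 : MvPolynomial (Fin 6) ℂ) = C (4:ℂ) from (map_ofNat C 4).symm]
  simp only [map_sub, map_add, Derivation.leibniz, Derivation.leibniz_pow, pderiv_C,
    pderiv_X_self, pderiv_X_of_ne (show (5:Fin 6) ≠ 4 by decide),
    pderiv_X_of_ne (show (1:Fin 6) ≠ 4 by decide), pderiv_X_of_ne (show (0:Fin 6) ≠ 4 by decide),
    pderiv_X_of_ne (show (2:Fin 6) ≠ 4 by decide), pderiv_X_of_ne (show (3:Fin 6) ≠ 4 by decide),
    smul_eq_mul, mul_zero, zero_mul, mul_one, add_zero, zero_add]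
  rw [show (C (4:ℂ) : MvPolynomial (Fin 6) ℂ) = 4 from map_ofNat C 4]
  ring

lemma famPoly_pderiv_y :
    MvPolynomial.pderiv 5 famPoly = 2 * X 5 := by
  unfold famPoly
  rw [show (4 : MvPolynomial (Fin 6) ℂ) = C (4:ℂ) from (map_ofNat C 4).symm]
  simp only [map_sub, map_add, Derivation.leibniz, Derivation.leibniz_pow, pderiv_C,
    pderiv_X_self, pderiv_X_of_ne (show (4:Fin 6) ≠ 5 by decide),
    pderiv_X_of_ne (show (1:Fin 6) ≠ 5 by decide), pderiv_X_of_ne (show (0:Fin 6) ≠ 5 by decide),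
    pderiv_X_of_ne (show (2:Fin 6) ≠ 5 by decide), pderiv_X_of_ne (show (3:Fin 6) ≠ 5 by decide),
    smul_eq_mul, mul_zero, zero_mul, mul_one, add_zero, zero_add]
  ring

/-- some power of `t₀` times the discriminant `27t₀t₃² − t₂³` lies in the
ideal generated by `f`, `∂f/∂x` and `∂f/∂y`; equivalently, after inverting `t₀`, the
discriminant `Δ = t₀(27t₀t₃² − t₂³)` annihilates the module
`V = Ω²/(df ∧ Ω¹ + fΩ²)` of the family. -/
theorem discriminant_annihilates :
    ∃ N : ℕ,
      (X 0 : MvPolynomial (Fin 6) ℂ) ^ N * (27 * X 0 * (X 3) ^ 2 - (X 2) ^ 3) ∈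
        Ideal.span {famPoly, MvPolynomial.pderiv 4 famPoly, MvPolynomial.pderiv 5 famPoly} := by
  refine ⟨0, ?_⟩
  set I := Ideal.span
      {famPoly, MvPolynomial.pderiv 4 famPoly, MvPolynomial.pderiv 5 famPoly} with hI
  have hf : famPoly ∈ I := Ideal.subset_span (by simp)
  have hfx : MvPolynomial.pderiv 4 famPoly ∈ I := Ideal.subset_span (by simp)
  have hfy : MvPolynomial.pderiv 5 famPoly ∈ I := Ideal.subset_span (by simp)
  set u : MvPolynomial (Fin 6) ℂ := X 4 - X 1 with hu
  set Q : MvPolynomial (Fin 6) ℂ :=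
      famPoly - (X 5) ^ 2 - 16 * X 0 * u ^ 3 - 2 * u * MvPolynomial.pderiv 4 famPoly with hQ
  have key : (2 : MvPolynomial (Fin 6) ℂ) *
      ((X 0 : MvPolynomial (Fin 6) ℂ) ^ 0 * (27 * X 0 * (X 3) ^ 2 - (X 2) ^ 3)) =
      (54 * X 0 * Q) * famPoly
        + (-2 * (9 * X 0 * u ^ 2 + MvPolynomial.pderiv 4 famPoly)
            * MvPolynomial.pderiv 4 famPoly) * MvPolynomial.pderiv 4 famPoly
        + (-(27 * X 0 * X 5 * Q)) * MvPolynomial.pderiv 5 famPoly := by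
    rw [hQ, hu, famPoly_pderiv_x, famPoly_pderiv_y]
    unfold famPoly
    ring
  have h2 : (2 : MvPolynomial (Fin 6) ℂ) *
      ((X 0 : MvPolynomial (Fin 6) ℂ) ^ 0 * (27 * X 0 * (X 3) ^ 2 - (X 2) ^ 3)) ∈ I := by
    rw [key]
    exact add_mem (add_mem (Ideal.mul_mem_left _ _ hf) (Ideal.mul_mem_left _ _ hfx))
      (Ideal.mul_mem_left _ _ hfy)
  have h3 := Ideal.mul_mem_left I (C ((2 : ℂ)⁻¹)) h2
  have heq : C ((2 : ℂ)⁻¹) * ((2 : MvPolynomial (Fin 6) ℂ) *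
      ((X 0 : MvPolynomial (Fin 6) ℂ) ^ 0 * (27 * X 0 * (X 3) ^ 2 - (X 2) ^ 3))) =
      (X 0 : MvPolynomial (Fin 6) ℂ) ^ 0 * (27 * X 0 * (X 3) ^ 2 - (X 2) ^ 3) := by
    rw [← mul_assoc, show (2 : MvPolynomial (Fin 6) ℂ) = C (2:ℂ) from (map_ofNat C 2).symm,
      ← C_mul]
    norm_num
  rwa [heq] at h3
end
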